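/- (Weak twisted associativity) Let V be an (r+1)-toroidal vertex algebra, σ an automorphism of V with σ^N = 1, and (W, Y_W) a σ-twisted V-module. Then for u ∈ V^s (0 ≤ s < N), v ∈ V, and w ∈ W, there exists a nonnegative integer ℓ such that (z_0+y_0)^{ℓ+s/N} Y_W(u;z_0+y_0,zy) Y_W(v;y_0,y) w = (y_0+z_0)^{ℓ+s/N} Y_W(Y(u;z_0,z)v;y_0,y) w, where (z_0+y_0)^α is expanded in nonnegative integer powers of y_0, (y_0+z_0)^α is expanded in nonnegative integer powers of z_0, and Y_W(u;z_0+y_0,zy) denotes the substitution x_0 = z_0+y_0 in Y_W(u;x_0,zy) with negative powers of x_0 expanded in nonnegative integer powers of y_0. -/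

import Mathlib

open scoped BigOperators

attribute [local instance] Classical.propDecidable

noncomputable section

/-- Generalized binomial coefficient `C(q, i)` for a rational `q`:
`q(q-1)⋯(q-i+1)/i!`. -/
def qchoose (q : ℚ) (i : ℕ) : ℚ := (descPochhammer ℚ i).eval q / (Nat.factorial i : ℚ)

/-- `C(q, i)` as a complex scalar. -/
def binomC (q : ℚ) (i : ℕ) : ℂ := (qchoose q i : ℂ)

/-- `ω_N = exp(2π√-1/N)`, the principal primitive `N`-th root of unity. -/
def rtu (N : ℕ) : ℂ := Complex.exp (2 * Real.pi * Complex.I / (N : ℂ))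

/-- An `(r+1)`-toroidal vertex algebra, encoded through the mode operators
`v_{m₀,m}` of the vertex operator map
`Y(v;x₀,x) = ∑ v_{m₀,m} x₀^{-m₀-1} x^{-m}`.  The axioms are the
coefficient-wise versions of the vacuum, creation and Jacobi identity
axioms. -/
structure ToroidalVA (r : ℕ) (V : Type) [AddCommGroup V] [Module ℂ V] where
  /-- the mode maps `v ↦ v_{m₀,m}` -/
  Y : V →ₗ[ℂ] (ℤ → (Fin r → ℤ) → Module.End ℂ V)
  /-- the vacuum vector `𝟏` -/
  vac : V
  /-- lower truncation: `Y` maps into `E(V,r) = Hom(V, V[[x₁^{±1},…]]((x₀)))` -/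
  trunc : ∀ u v : V, ∃ M : ℤ, ∀ m0 : ℤ, M ≤ m0 → ∀ m : Fin r → ℤ, Y u m0 m v = 0
  /-- `Y(𝟏;x₀,x)v = v` -/
  vac_act : ∀ (v : V) (m0 : ℤ) (m : Fin r → ℤ),
    Y vac m0 m v = if m0 = -1 ∧ m = 0 then v else 0
  /-- `Y(v;x₀,x)𝟏 ∈ V[[x₀,x₁^{±1},…,x_r^{±1}]]` -/
  creation : ∀ (v : V) (m0 : ℤ) (m : Fin r → ℤ), 0 ≤ m0 → Y v m0 m vac = 0
  /-- the Jacobi identity, written out in components -/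
  jacobi : ∀ (u v w : V) (m0 n0 k0 : ℤ) (p q : Fin r → ℤ),
    (∑ᶠ i : ℕ, ((-1 : ℂ) ^ i * binomC (k0 : ℚ) i) •
      (Y u (m0 + k0 - i) p (Y v (n0 + i) (q - p) w)
        - ((-1 : ℂ) ^ (k0 : ℤ)) • Y v (n0 + k0 - i) (q - p) (Y u (m0 + i) p w)))
    = ∑ᶠ i : ℕ, binomC (m0 : ℚ) i • Y (Y u (k0 + i) p v) (m0 + n0 - i) q w

/-- An automorphism of an `(r+1)`-toroidal vertex algebra: a bijective linear
map fixing the vacuum and intertwining all mode operators. -/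
def ToroidalVA.IsAut {r : ℕ} {V : Type} [AddCommGroup V] [Module ℂ V]
    (T : ToroidalVA r V) (σ : Module.End ℂ V) : Prop :=
  Function.Bijective σ ∧ σ T.vac = T.vac ∧
    ∀ (u v : V) (m0 : ℤ) (m : Fin r → ℤ), σ (T.Y u m0 m v) = T.Y (σ u) m0 m (σ v)

/-- A `σ`-twisted module for an `(r+1)`-toroidal vertex algebra `V` (with `σ`
an automorphism of period `N`), encoded through the mode operators
`v_{m₀,m}` (`m₀ ∈ (1/N)ℤ`) of `Y_W(v;x₀,x) = ∑ v_{m₀,m} x₀^{-m₀-1} x^{-m}`.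
The twisted Jacobi identity is recorded in its coefficient-wise form, for
`σ`-eigenvectors `u ∈ V^s` (which is equivalent to the usual formulation by
linearity, since `V = ⊕ V^s`). -/
structure TwistedModule (r N : ℕ) {V : Type} [AddCommGroup V] [Module ℂ V]
    (T : ToroidalVA r V) (σ : Module.End ℂ V)
    (W : Type) [AddCommGroup W] [Module ℂ W] where
  /-- the twisted mode maps `v ↦ v_{m₀,m}` -/
  Yw : V →ₗ[ℂ] (ℚ → (Fin r → ℤ) → Module.End ℂ W)
  /-- modes are supported on `m₀ ∈ (1/N)ℤ` -/
  frac : ∀ (u : V) (m0 : ℚ) (m : Fin r → ℤ),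
    (∀ t : ℤ, m0 ≠ (t : ℚ) / (N : ℚ)) → Yw u m0 m = 0
  /-- lower truncation: `Y_W` maps into `E(W,r;N)` -/
  trunc : ∀ (u : V) (w : W), ∃ M : ℚ, ∀ m0 : ℚ, M ≤ m0 → ∀ m : Fin r → ℤ,
    Yw u m0 m w = 0
  /-- `Y_W(𝟏;x₀,x) = 1_W` -/
  vac_act : ∀ (m0 : ℚ) (m : Fin r → ℤ),
    Yw T.vac m0 m = if m0 = -1 ∧ m = 0 then 1 else 0
  /-- the twisted Jacobi identity in components, for `u ∈ V^s` -/
  jacobi : ∀ (u : V) (s : ℕ), s < N → σ u = (rtu N) ^ s • u →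
    ∀ (v : V) (w : W) (m0 n0 : ℚ) (k0 : ℤ) (p q : Fin r → ℤ),
    (∑ᶠ i : ℕ, ((-1 : ℂ) ^ i * binomC (k0 : ℚ) i) •
      (Yw u (m0 + k0 - i) p (Yw v (n0 + i) (q - p) w)
        - ((-1 : ℂ) ^ (k0 : ℤ)) • Yw v (n0 + k0 - i) (q - p) (Yw u (m0 + i) p w)))
    = if ∃ t : ℤ, m0 = (s : ℚ) / (N : ℚ) + (t : ℚ) then
        ∑ᶠ i : ℕ, binomC m0 i • Yw (T.Y u (k0 + i) p v) (m0 + n0 - i) q w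
      else 0

end

/-! Choose `ℓ` with `u_{ℓ+s/N+n} w = 0` for all `n ≥ 0`. For integral `Z`, collecting the left-hand
side by `n = i + j` turns the product of binomial coefficients into `(-1)^n C(-1-Z, n)`
(Chu–Vandermonde), and what remains is the twisted Jacobi identity at `m₀ = ℓ + s/N`,
`k₀ = -1 - Z`, whose second term vanishes by the choice of `ℓ`. For non-integral `Z` both sides
vanish, since the modes of `u ∈ V^s` are supported on `s/N + ℤ`. -/

open Finset

@[simp]
theorem binomC_zero (q : ℚ) : binomC q 0 = 1 := by
  simp [binomC, qchoose]

theorem qchoose_eq_choose (q : ℚ) (n : ℕ) : qchoose q n = Ring.choose q n := by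
  rw [Ring.choose_eq_smul, smul_eq_mul, qchoose, div_eq_inv_mul, ← Polynomial.aeval_eq_smeval,
    Polynomial.aeval_def, ← Polynomial.eval_map, descPochhammer_map]

theorem binomC_add_natCast_self (x : ℚ) (n : ℕ) :
    binomC (x + n) n = (-1) ^ n * binomC (-1 - x) n := by
  have h := Ring.choose_neg (1 + x) n
  rw [neg_add', add_assoc, add_sub_cancel_left, Units.smul_def, Int.coe_negOnePow_natCast,
    zsmul_eq_mul] at h
  simp only [binomC, qchoose_eq_choose, h]
  push_cast
  rw [← mul_assoc, ← mul_pow, neg_one_mul, neg_neg, one_pow, one_mul]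

theorem sum_antidiagonal_binomC_mul (a b : ℚ) (n : ℕ) :
    ∑ ij ∈ antidiagonal n, binomC a ij.1 * binomC b ij.2 = binomC (a + b) n := by
  simp only [binomC, ← Rat.cast_mul, ← Rat.cast_sum, qchoose_eq_choose,
    Ring.add_choose_eq n (Commute.all a b)]

theorem finsum_finsum_eq_finsum_sum_antidiagonal {M : Type*} [AddCommMonoid M]
    (f : ℕ → ℕ → M) {D : ℕ} (hf : ∀ i j, D ≤ i + j → f i j = 0) :
    ∑ᶠ i, ∑ᶠ j, f i j = ∑ᶠ n, ∑ ij ∈ antidiagonal n, f ij.1 ij.2 := by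
  have hrow : ∀ i, ∑ᶠ j, f i j = ∑ j ∈ range (D - i), f i j := fun i =>
    finsum_eq_sum_of_support_subset _ fun j hj => by
      by_contra hjD
      rw [coe_range, Set.mem_Iio, not_lt] at hjD
      exact hj (hf i j (by omega))
  have hdiag : ∀ n, ∑ ij ∈ antidiagonal n, f ij.1 ij.2 = ∑ k ∈ range (n + 1), f k (n - k) :=
    Nat.sum_antidiagonal_eq_sum_range_succ f
  rw [finsum_congr hrow, finsum_congr hdiag,
    finsum_eq_sum_of_support_subset _ (s := range D) fun i hi => by
      by_contra hiD
      rw [coe_range, Set.mem_Iio, not_lt] at hiD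
      exact hi (by simp only [Nat.sub_eq_zero_of_le hiD, range_zero, sum_empty]),
    finsum_eq_sum_of_support_subset _ (s := range D) fun n hn => by
      by_contra hnD
      rw [coe_range, Set.mem_Iio, not_lt] at hnD
      exact hn (sum_eq_zero fun k hk => hf _ _ (by rw [mem_range] at hk; omega)),
    sum_range_diag_flip]

theorem finsum_finsum_binomC_mul_smul {M : Type*} [AddCommGroup M] [Module ℂ M] (a x : ℚ)
    (X : ℕ → M) {D : ℕ} (hX : ∀ n, D ≤ n → X n = 0) :
    ∑ᶠ i : ℕ, ∑ᶠ j : ℕ, (binomC a i * binomC (x + i + j - a) j) • X (i + j)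
      = ∑ᶠ n : ℕ, ((-1) ^ n * binomC (-1 - x) n) • X n := by
  rw [finsum_finsum_eq_finsum_sum_antidiagonal _ fun i j h => by rw [hX _ h, smul_zero]]
  refine finsum_congr fun n => ?_
  calc ∑ ij ∈ antidiagonal n, (binomC a ij.1 * binomC (x + ij.1 + ij.2 - a) ij.2) • X (ij.1 + ij.2)
      = (∑ ij ∈ antidiagonal n, binomC a ij.1 * binomC (x + n - a) ij.2) • X n := by
        rw [sum_smul]
        refine sum_congr rfl fun ij hij => ?_
        rw [← mem_antidiagonal.mp hij, Nat.cast_add, add_assoc]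
    _ = ((-1) ^ n * binomC (-1 - x) n) • X n := by
        rw [sum_antidiagonal_binomC_mul, add_sub_cancel, binomC_add_natCast_self]

theorem finsum_ite_intCast_eq_smul {R M : Type*} [Semiring R] [AddCommMonoid M] [Module R M]
    (c : R) (F : ℤ → M) (k₀ : ℤ) :
    ∑ᶠ k : ℤ, (if (k : ℚ) = k₀ then c else 0) • F k = c • F k₀ := by
  simp_rw [Int.cast_inj]
  rw [finsum_eq_single _ k₀ fun k hk => by rw [if_neg hk, zero_smul], if_pos rfl]

namespace TwistedModule

variable {r N : ℕ} {V : Type} [AddCommGroup V] [Module ℂ V] {T : ToroidalVA r V}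
  {σ : Module.End ℂ V} {W : Type} [AddCommGroup W] [Module ℂ W] (M : TwistedModule r N T σ W)
  {u : V} {s : ℕ}

/-- The twisted Jacobi identity for `(u, 𝟏)` with `k₀ = -1` collapses to `u_{m₀} = 0`. -/
theorem Yw_eq_zero_of_notMem_coset (hs : s < N) (hu : σ u = rtu N ^ s • u) {m0 : ℚ}
    (hm0 : ¬ ∃ t : ℤ, m0 = s / N + t) (p : Fin r → ℤ) : M.Yw u m0 p = 0 := by
  ext w
  have hJ := M.jacobi u s hs hu T.vac w (m0 + 1) (-1) (-1) p p
  have hvac : ∀ i : ℕ, M.Yw T.vac (-1 + (-1 : ℤ) - i) (p - p) = 0 := fun i => by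
    rw [M.vac_act, if_neg fun h => by push_cast at h; linarith [h.1, i.cast_nonneg (α := ℚ)]]
  rw [if_neg fun ⟨t, ht⟩ => hm0 ⟨t - 1, by push_cast; linarith⟩,
    finsum_eq_single _ 0 fun i hi => ?_] at hJ
  · simpa [hvac, M.vac_act] using hJ
  · rw [hvac, M.vac_act, if_neg fun h => hi (by exact_mod_cast add_eq_left.mp h.1)]
    simp

theorem jacobi_of_modes_eq_zero (hs : s < N) (hu : σ u = rtu N ^ s • u) {m0 : ℚ}
    (hm0 : ∃ t : ℤ, m0 = s / N + t) {p : Fin r → ℤ} {w : W}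
    (hvan : ∀ n : ℕ, M.Yw u (m0 + n) p w = 0) (v : V) (n0 : ℚ) (k0 : ℤ) (q : Fin r → ℤ) :
    ∑ᶠ i : ℕ, ((-1 : ℂ) ^ i * binomC k0 i) • M.Yw u (m0 + k0 - i) p (M.Yw v (n0 + i) (q - p) w)
      = ∑ᶠ i : ℕ, binomC m0 i • M.Yw (T.Y u (k0 + i) p v) (m0 + n0 - i) q w := by
  simpa only [hvan, map_zero, smul_zero, sub_zero, if_pos hm0]
    using M.jacobi u s hs hu v w m0 n0 k0 p q

theorem finsum_binomC_Yw_Yw_eq_finsum_binomC_Yw_Y (hs : s < N) (hu : σ u = rtu N ^ s • u)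
    {a : ℚ} (ha : ∃ t : ℤ, a = s / N + t) {p : Fin r → ℤ} {w : W}
    (hvan : ∀ n : ℕ, M.Yw u (a + n) p w = 0) (v : V) (k : ℤ) (B : ℚ) (q : Fin r → ℤ) :
    ∑ᶠ i : ℕ, ∑ᶠ j : ℕ, (binomC a i * binomC (k + i + j - a) j) •
        M.Yw u (a - 1 - k - i - j) p (M.Yw v (B + i + j) (q - p) w)
      = ∑ᶠ i : ℕ, binomC a i • M.Yw (T.Y u (i - k - 1) p v) (a + B - i) q w := by
  obtain ⟨Mv, hMv⟩ := M.trunc v w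
  obtain ⟨D, hD⟩ := exists_nat_ge (Mv - B)
  set X : ℕ → W := fun n => M.Yw u (a + (-1 - k : ℤ) - n) p (M.Yw v (B + n) (q - p) w)
  have hX : ∀ n, D ≤ n → X n = 0 := fun n hn => by
    simp only [X, hMv (B + n) (by linarith [(Nat.cast_le (α := ℚ)).mpr hn]), map_zero]
  calc _ = ∑ᶠ i : ℕ, ∑ᶠ j : ℕ, (binomC a i * binomC (k + i + j - a) j) • X (i + j) := by
        refine finsum_congr fun i => finsum_congr fun j => ?_
        have hu_index : a - 1 - k - i - j = a + (-1 - k : ℤ) - (i + j : ℕ) := by push_cast; ring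
        have hv_index : B + i + j = B + (i + j : ℕ) := by push_cast; ring
        rw [hu_index, hv_index]
    _ = ∑ᶠ n : ℕ, ((-1) ^ n * binomC (-1 - k : ℤ) n) • X n := by
        rw [finsum_finsum_binomC_mul_smul a k X hX, Int.cast_sub, Int.cast_neg, Int.cast_one]
    _ = _ := by
        rw [M.jacobi_of_modes_eq_zero hs hu ha hvan v B (-1 - k) q]
        exact finsum_congr fun i => by rw [show -1 - k + (i : ℤ) = i - k - 1 by ring]

end TwistedModule

/-- The identity is stated coefficientwise: both sides are the coefficient of
`z₀^{Z} y₀^{-B-1} z^{-p} y^{-q}`, the sum over `k` on the right picking out the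
`z₀`-exponent `-k-1 = Z - i`. -/
theorem twisted_weak_associativity_general
    {r N : ℕ}
    {V : Type} [AddCommGroup V] [Module ℂ V]
    (T : ToroidalVA r V) (σ : Module.End ℂ V)
    {W : Type} [AddCommGroup W] [Module ℂ W]
    (M : TwistedModule r N T σ W)
    (u : V) (s : ℕ) (hs : s < N) (hu : σ u = (rtu N) ^ s • u)
    (v : V) (w : W) :
    ∃ l : ℕ, ∀ (Z B : ℚ) (p q : Fin r → ℤ),
      (∑ᶠ i : ℕ, ∑ᶠ j : ℕ,
        (binomC ((l : ℚ) + (s : ℚ) / (N : ℚ)) i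
          * binomC (Z + i + j - (l : ℚ) - (s : ℚ) / (N : ℚ)) j) •
          M.Yw u ((l : ℚ) + (s : ℚ) / (N : ℚ) - 1 - Z - i - j) p
            (M.Yw v (B + i + j) (q - p) w))
      = ∑ᶠ i : ℕ, ∑ᶠ k : ℤ,
          (if (k : ℚ) = (i : ℚ) - Z - 1
            then binomC ((l : ℚ) + (s : ℚ) / (N : ℚ)) i else 0) •
            M.Yw (T.Y u k p v) ((l : ℚ) + (s : ℚ) / (N : ℚ) + B - i) q w := by
  obtain ⟨Mu, hMu⟩ := M.trunc u w
  obtain ⟨l, hl⟩ := exists_nat_ge (Mu - s / N)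
  refine ⟨l, fun Z B p q => ?_⟩
  set a : ℚ := l + s / N
  by_cases hZ : ∃ k : ℤ, Z = k
  · obtain ⟨k, rfl⟩ := hZ
    have hvan : ∀ n : ℕ, M.Yw u (a + n) p w = 0 := fun n =>
      hMu (a + n) (by linarith [n.cast_nonneg (α := ℚ)]) p
    simp_rw [sub_sub _ (l : ℚ)]
    rw [M.finsum_binomC_Yw_Yw_eq_finsum_binomC_Yw_Y hs hu ⟨l, by push_cast; ring⟩ hvan v k B q]
    refine finsum_congr fun i => ?_
    rw [show (i : ℚ) - k - 1 = ((i - k - 1 : ℤ) : ℚ) by push_cast; ring,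
      finsum_ite_intCast_eq_smul]
  · have hu_vanish : ∀ i j : ℕ, M.Yw u (a - 1 - Z - i - j) p = 0 := fun i j =>
      M.Yw_eq_zero_of_notMem_coset hs hu
        (fun ⟨t, ht⟩ => hZ ⟨l - 1 - i - j - t, by push_cast; linarith⟩) p
    have hk : ∀ (i : ℕ) (k : ℤ), (k : ℚ) ≠ i - Z - 1 := fun i k h =>
      hZ ⟨i - 1 - k, by push_cast; linarith⟩
    simp [hu_vanish, hk]

/-- (Weak twisted associativity.)  For `u ∈ V^s`
(`0 ≤ s < N`), `v ∈ V`, `w ∈ W`, there exists `ℓ ∈ ℕ` with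
`(z₀+y₀)^{ℓ+s/N} Y_W(u;z₀+y₀,zy) Y_W(v;y₀,y) w
  = (y₀+z₀)^{ℓ+s/N} Y_W(Y(u;z₀,z)v;y₀,y) w`,
written out in coefficients: for every `Z, B : ℚ`, the coefficient of
`z₀^{Z} y₀^{-B-1} z^{-p} y^{-q}` of the left-hand side (where
`(z₀+y₀)^{ℓ+s/N}` and the substituted powers of `x₀ = z₀+y₀` are expanded in
nonnegative integer powers of `y₀`) equals that of the right-hand side
(where `(y₀+z₀)^{ℓ+s/N}` is expanded in nonnegative integer powers of `z₀`;
the inner sum over `k : ℤ` localizes `z₀^{-k-1}` against the remaining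
`z₀`-exponent and vanishes unless `Z ∈ ℤ`). -/
theorem twisted_weak_associativity
    {r N : ℕ} (hr : 0 < r) (hN : 0 < N)
    {V : Type} [AddCommGroup V] [Module ℂ V]
    (T : ToroidalVA r V) (σ : Module.End ℂ V)
    (haut : T.IsAut σ) (hper : σ ^ N = 1)
    {W : Type} [AddCommGroup W] [Module ℂ W]
    (M : TwistedModule r N T σ W)
    (u : V) (s : ℕ) (hs : s < N) (hu : σ u = (rtu N) ^ s • u)
    (v : V) (w : W) :
    ∃ l : ℕ, ∀ (Z B : ℚ) (p q : Fin r → ℤ),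
      (∑ᶠ i : ℕ, ∑ᶠ j : ℕ,
        (binomC ((l : ℚ) + (s : ℚ) / (N : ℚ)) i
          * binomC (Z + i + j - (l : ℚ) - (s : ℚ) / (N : ℚ)) j) •
          M.Yw u ((l : ℚ) + (s : ℚ) / (N : ℚ) - 1 - Z - i - j) p
            (M.Yw v (B + i + j) (q - p) w))
      = ∑ᶠ i : ℕ, ∑ᶠ k : ℤ,
          (if (k : ℚ) = (i : ℚ) - Z - 1
            then binomC ((l : ℚ) + (s : ℚ) / (N : ℚ)) i else 0) •
            M.Yw (T.Y u k p v) ((l : ℚ) + (s : ℚ) / (N : ℚ) + B - i) q w :=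
  twisted_weak_associativity_general T σ M u s hs hu v w
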